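/- arXiv:1607.07194 — 5 statements merged into one kernel-verified Lean document; each statement's English description precedes it below -/
import Mathlib

section
/- If λ₁ ≥ λ₂ ≥ ⋯ ≥ λₙ are real numbers with ∑ᵢ arctan λᵢ ≥ (n−2)π/2 + δ for some δ > 0, then λ₁, …, λ_{n−1} are all positive. -/
/-! Every `arctan` term is below `π / 2` and a nonpositive one is at most `0`, so two nonpositive
`λᵢ` cap the sum at `(n - 2) π / 2`. If `λᵢ ≤ 0` for some `i < n - 1`, then `λₙ ≤ 0` too by
monotonicity, which gives two such terms. -/

open Real Finset

lemma sum_arctan_le_of_two_nonpos {ι : Type*} [DecidableEq ι] {s : Finset ι} (f : ι → ℝ)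
    {i j : ι} (hi : i ∈ s) (hj : j ∈ s) (hij : i ≠ j) (hfi : f i ≤ 0) (hfj : f j ≤ 0) :
    ∑ k ∈ s, arctan (f k) ≤ ((#s : ℝ) - 2) * (π / 2) := by
  have hj' : j ∈ s.erase i := mem_erase.2 ⟨hij.symm, hj⟩
  have hcard : (#((s.erase i).erase j) : ℝ) = #s - 2 := by
    have htwo : 2 ≤ #s := one_lt_card.2 ⟨i, hi, j, hj, hij⟩
    rw [card_erase_of_mem hj', card_erase_of_mem hi, Nat.sub_sub, Nat.cast_sub htwo]
    norm_num
  have hrest : ∑ k ∈ (s.erase i).erase j, arctan (f k) ≤ ((#s : ℝ) - 2) * (π / 2) := by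
    rw [← hcard, ← nsmul_eq_mul]
    exact sum_le_card_nsmul _ _ _ fun k _ ↦ (arctan_lt_pi_div_two _).le
  have harctan_nonpos : ∀ x : ℝ, x ≤ 0 → arctan x ≤ 0 := fun x hx ↦ arctan_zero ▸ arctan_mono hx
  rw [← add_sum_erase _ _ hi, ← add_sum_erase _ _ hj']
  linarith [harctan_nonpos _ hfi, harctan_nonpos _ hfj]

theorem stmt0_general (n : ℕ) (lam : Fin n → ℝ) (hmono : Antitone lam)
    (δ : ℝ) (hδ : 0 < δ)
    (hsum : ((n : ℝ) - 2) * (π / 2) + δ ≤ ∑ i, Real.arctan (lam i)) :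
    ∀ i : Fin n, (i : ℕ) < n - 1 → 0 < lam i := by
  intro i hi
  by_contra! hlam
  let last : Fin n := ⟨n - 1, by omega⟩
  have hlast : lam last ≤ 0 := (hmono (Fin.le_def.2 (Nat.le_sub_one_of_lt i.isLt))).trans hlam
  have hne : i ≠ last := Fin.ne_of_val_ne hi.ne
  have hsum_le := sum_arctan_le_of_two_nonpos lam (mem_univ i) (mem_univ last) hne hlam hlast
  rw [card_univ, Fintype.card_fin] at hsum_le
  linarith

theorem stmt0 (n : ℕ) (hn : 2 ≤ n) (lam : Fin n → ℝ) (hmono : Antitone lam)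
    (δ : ℝ) (hδ : 0 < δ)
    (hsum : ((n : ℝ) - 2) * (π / 2) + δ ≤ ∑ i, Real.arctan (lam i)) :
    ∀ i : Fin n, (i : ℕ) < n - 1 → 0 < lam i :=
  stmt0_general n lam hmono δ hδ hsum
end

section
/- If λ₁ ≥ λ₂ ≥ ⋯ ≥ λₙ are real numbers with ∑ᵢ arctan λᵢ ≥ (n−2)π/2 + δ for some δ > 0, then |λₙ| ≤ λ_{n−1}. -/
open Real Finset

theorem stmt1 (n : ℕ) (hn : 2 ≤ n) (lam : Fin n → ℝ) (hmono : Antitone lam)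
    (δ : ℝ) (hδ : 0 < δ)
    (hsum : ((n : ℝ) - 2) * (π / 2) + δ ≤ ∑ i, Real.arctan (lam i)) :
    |lam ⟨n - 1, by omega⟩| ≤ lam ⟨n - 2, by omega⟩ := by
  set i₁ : Fin n := ⟨n - 1, by omega⟩ with hi₁
  set i₂ : Fin n := ⟨n - 2, by omega⟩ with hi₂
  have hne : i₂ ≠ i₁ ∨ n = 2 := by
    rcases eq_or_lt_of_le hn with h | h
    · right; omega
    · left; rw [hi₁, hi₂]; simp only [ne_eq, Fin.mk.injEq]; omega
  have hab : lam i₁ ≤ lam i₂ := by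
    apply hmono
    rw [hi₁, hi₂, Fin.mk_le_mk]
    omega
  rw [abs_le]
  refine ⟨?_, hab⟩
  by_contra h
  push_neg at h
  have h1 : arctan (lam i₁) < arctan (-(lam i₂)) := Real.arctan_strictMono h
  rw [Real.arctan_neg] at h1
  rcases hne with hne | hn2
  · have hmem : i₂ ∈ univ.erase i₁ := Finset.mem_erase.2 ⟨hne, Finset.mem_univ _⟩
    have hsplit : ∑ i, arctan (lam i)
        = (∑ i ∈ (univ.erase i₁).erase i₂, arctan (lam i)) + arctan (lam i₂) + arctan (lam i₁) := by
      rw [← Finset.sum_erase_add _ _ (Finset.mem_univ i₁), ← Finset.sum_erase_add _ _ hmem]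
    have hcard : ((univ.erase i₁).erase i₂).card = n - 2 := by
      rw [Finset.card_erase_of_mem hmem, Finset.card_erase_of_mem (Finset.mem_univ i₁)]
      simp only [Finset.card_univ, Fintype.card_fin]
      omega
    have hbound : ∑ i ∈ (univ.erase i₁).erase i₂, arctan (lam i) ≤ ((n : ℝ) - 2) * (π / 2) := by
      calc ∑ i ∈ (univ.erase i₁).erase i₂, arctan (lam i)
          ≤ ((univ.erase i₁).erase i₂).card • (π / 2) :=
            Finset.sum_le_card_nsmul _ _ _ (fun i _ => (Real.arctan_lt_pi_div_two _).le)
        _ = ((n : ℝ) - 2) * (π / 2) := by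
            rw [hcard, nsmul_eq_mul]
            have : ((n - 2 : ℕ) : ℝ) = (n : ℝ) - 2 := by
              rw [Nat.cast_sub hn]; norm_num
            rw [this]
    rw [hsplit] at hsum
    linarith
  · subst hn2
    have hsum' : ∑ i, arctan (lam i) = arctan (lam i₂) + arctan (lam i₁) := by
      rw [Fin.sum_univ_two]; rfl
    rw [hsum'] at hsum
    norm_num at hsum
    linarith
end

section
/- If λ₁ ≥ λ₂ ≥ ⋯ ≥ λₙ are real numbers with ∑ᵢ arctan λᵢ ≥ (n−2)π/2 + δ for some δ > 0, then ∑ᵢ λᵢ ≥ 0. -/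
/-! Each arctangent is below `π / 2`, so the hypothesis forces the arctangents of the two
smallest values, `λₙ₋₁ ≥ λₙ`, to have positive sum; as `arctan` is odd and increasing this
gives `λₙ₋₁ + λₙ > 0`, hence `λₙ₋₁ > 0`, and all the remaining values are at least `λₙ₋₁`. -/

open Real Finset

lemma sum_arctan_le_card_mul {ι : Type*} (s : Finset ι) (f : ι → ℝ) :
    ∑ k ∈ s, arctan (f k) ≤ s.card * (π / 2) := by
  simpa [nsmul_eq_mul] using
    Finset.sum_le_card_nsmul s _ _ fun k _ => (arctan_lt_pi_div_two (f k)).le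

lemma add_pos_of_arctan_add_arctan_pos {a b : ℝ} (h : 0 < arctan a + arctan b) : 0 < a + b := by
  have : arctan (-a) < arctan b := by rw [arctan_neg]; linarith
  linarith [arctan_strictMono.lt_iff_lt.mp this]

theorem stmt2 (n : ℕ) (hn : 2 ≤ n) (lam : Fin n → ℝ) (hmono : Antitone lam)
    (δ : ℝ) (hδ : 0 < δ)
    (hsum : ((n : ℝ) - 2) * (π / 2) + δ ≤ ∑ i, Real.arctan (lam i)) :
    0 ≤ ∑ i, lam i := by
  obtain ⟨m, rfl⟩ : ∃ m, n = m + 2 := ⟨n - 2, by omega⟩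
  set a := lam (Fin.last m).castSucc
  set b := lam (Fin.last (m + 1))
  simp only [Fin.sum_univ_castSucc] at hsum ⊢
  have hrest := sum_arctan_le_card_mul univ fun i : Fin m => lam i.castSucc.castSucc
  rw [card_univ, Fintype.card_fin] at hrest
  have hab : 0 < a + b := by
    apply add_pos_of_arctan_add_arctan_pos
    push_cast at hsum
    linarith
  have ha : 0 < a := by linarith [hmono (Fin.castSucc_lt_last (Fin.last m)).le]
  have hrest_nonneg : 0 ≤ ∑ i : Fin m, lam i.castSucc.castSucc :=
    sum_nonneg fun i _ =>
      ha.le.trans (hmono (Fin.castSucc_le_castSucc_iff.mpr (Fin.le_last i.castSucc)))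
  linarith
end

section
/- Let H be the n × n symmetric matrix with H_{ij} = (A + 2λᵢδ_{ij})/((1+λᵢ²)(1+λⱼ²)). Then det H = (A·2^{n−1}σ_{n−1}(λ) + 2ⁿσₙ(λ))/∏ᵢ(1+λᵢ²)². -/
open Finset Matrix

/-!
Writing `D = diagonal ((1 + λᵢ²)⁻¹)`, the matrix is `D * K * D` with `K = A • J + diagonal (2λ)`,
`J` the all-ones matrix. Expanding `det K` multilinearly in the rows, every term that takes the
constant row `A` twice vanishes, which leaves `∏ dᵢ + A * ∑ⱼ ∏_{i ≠ j} dᵢ` for `d = 2λ`; these are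
`2ⁿ σₙ(λ)` and `A 2ⁿ⁻¹ σₙ₋₁(λ)`.
-/

namespace Finset

variable {α β : Type*} [DecidableEq α] [AddCommMonoid β]

theorem powersetCard_card_sub_one {s : Finset α} (hs : s.Nonempty) :
    s.powersetCard (#s - 1) = s.image s.erase := by
  ext t
  simp only [mem_powersetCard, mem_image]
  constructor
  · rintro ⟨hts, hcard⟩
    obtain ⟨a, ha⟩ : ∃ a, s \ t = {a} := by
      rw [← card_eq_one, card_sdiff_of_subset hts, hcard]
      have := hs.card_pos
      omega
    refine ⟨a, ?_, ?_⟩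
    · exact (mem_sdiff.mp (ha ▸ mem_singleton_self a)).1
    · rw [← sdiff_singleton_eq_erase, ← ha, sdiff_sdiff_eq_self hts]
  · rintro ⟨a, ha, rfl⟩
    exact ⟨erase_subset a s, card_erase_of_mem ha⟩

theorem sum_powersetCard_card_sub_one {s : Finset α} (hs : s.Nonempty) (g : Finset α → β) :
    ∑ t ∈ s.powersetCard (#s - 1), g t = ∑ a ∈ s, g (s.erase a) := by
  rw [powersetCard_card_sub_one hs, sum_image (erase_injOn s)]

end Finset

namespace Matrix

variable {n R : Type*} [Fintype n] [DecidableEq n] [CommRing R]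

theorem det_replicateRow_add (v : n → R) (M : Matrix n n R) :
    (replicateRow n v + M).det = M.det + ∑ j, (M.updateRow j v).det := by
  let rows : Finset n → n → n → R := fun s => s.piecewise (fun _ => v) M
  have hexpand : (replicateRow n v + M).det = ∑ s, detRowAlternating (rows s) :=
    detRowAlternating.toMultilinearMap.map_add_univ (fun _ => v) M
  have hsingle : ∀ j, rows {j} = M.updateRow j v := fun j => piecewise_singleton _ _ _
  have hvanish : ∀ s : Finset n, 1 < #s → detRowAlternating (rows s) = 0 := by
    intro s hs
    obtain ⟨i, hi, j, hj, hij⟩ := one_lt_card.mp hs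
    refine detRowAlternating.map_eq_zero_of_eq _ ?_ hij
    exact (piecewise_eq_of_mem _ _ _ hi).trans (piecewise_eq_of_mem s (fun _ => v) M hj).symm
  have hsub : insert ∅ (univ.map ⟨singleton, singleton_injective⟩) ⊆ (univ : Finset (Finset n)) :=
    subset_univ _
  rw [hexpand, ← sum_subset hsub, sum_insert (by simp), sum_map]
  · simp only [Function.Embedding.coeFn_mk, hsingle]
    rfl
  · intro s _ hs
    refine hvanish s (lt_of_not_ge fun h => hs ?_)
    rcases Nat.le_one_iff_eq_zero_or_eq_one.mp h with h0 | h1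
    · exact mem_insert.mpr (Or.inl (card_eq_zero.mp h0))
    · obtain ⟨a, rfl⟩ := card_eq_one.mp h1
      exact mem_insert_of_mem (mem_map_of_mem _ (mem_univ a))

theorem det_diagonal_updateRow (d v : n → R) (j : n) :
    ((diagonal d).updateRow j v).det = (∏ i ∈ univ.erase j, d i) * v j := by
  rw [← det_transpose, ← updateCol_transpose, diagonal_transpose, ← cramer_apply,
    cramer_eq_adjugate_mulVec, adjugate_diagonal, mulVec_diagonal]

theorem det_const_add_diagonal (a : R) (d : n → R) :
    (of fun i j => a + if i = j then d i else 0).det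
      = a * ∑ j, ∏ i ∈ univ.erase j, d i + ∏ i, d i := by
  have h : (of fun i j => a + if i = j then d i else 0)
      = replicateRow n (fun _ => a) + diagonal d := by
    ext i j
    simp [diagonal_apply]
  rw [h, det_replicateRow_add, det_diagonal]
  simp only [det_diagonal_updateRow, ← sum_mul]
  ring

theorem det_diagonal_mul_mul_diagonal (c : n → R) (M : Matrix n n R) :
    (diagonal c * M * diagonal c).det = (∏ i, c i) ^ 2 * M.det := by
  rw [det_mul, det_mul, det_diagonal]
  ring

end Matrix

theorem stmt9 (n : ℕ) (hn : 1 ≤ n) (A : ℝ) (lam : Fin n → ℝ) :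
    (Matrix.of fun i j : Fin n =>
        (A + if i = j then 2 * lam i else 0) / ((1 + lam i ^ 2) * (1 + lam j ^ 2))).det
      = (A * 2 ^ (n - 1) *
            (∑ s ∈ Finset.univ.powersetCard (n - 1), ∏ i ∈ s, lam i)
          + 2 ^ n * (∑ s ∈ Finset.univ.powersetCard n, ∏ i ∈ s, lam i))
        / ∏ i, (1 + lam i ^ 2) ^ 2 := by
  set c : Fin n → ℝ := fun i => (1 + lam i ^ 2)⁻¹
  have hH : (of fun i j : Fin n =>
        (A + if i = j then 2 * lam i else 0) / ((1 + lam i ^ 2) * (1 + lam j ^ 2)))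
      = diagonal c * (of fun i j => A + if i = j then 2 * lam i else 0) * diagonal c := by
    ext i j
    simp only [mul_diagonal, diagonal_mul, of_apply, c]
    field_simp
  have hσn : ∑ s ∈ univ.powersetCard n, ∏ i ∈ s, lam i = ∏ i, lam i := by
    simpa using congrArg (∑ s ∈ ·, ∏ i ∈ s, lam i) (powersetCard_self (univ : Finset (Fin n)))
  have hσn1 : ∑ s ∈ univ.powersetCard (n - 1), ∏ i ∈ s, lam i
      = ∑ j, ∏ i ∈ univ.erase j, lam i := by
    have : Nonempty (Fin n) := ⟨⟨0, hn⟩⟩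
    simpa using sum_powersetCard_card_sub_one univ_nonempty (∏ i ∈ ·, lam i)
  rw [hH, det_diagonal_mul_mul_diagonal, det_const_add_diagonal, hσn, hσn1]
  simp only [c, prod_mul_distrib, prod_const, card_erase_of_mem (mem_univ _), card_univ,
    Fintype.card_fin, prod_inv_distrib, prod_pow, ← mul_sum]
  field_simp
end

section
/- If λ₁ ≥ ⋯ ≥ λₙ satisfy ∑ᵢ arctan λᵢ ≥ (n−2)π/2 + δ with δ > 0 and h < nπ/2, and H is a symmetric matrix with these eigenvalues, then the eigenvalues λ'₁, …, λ'_{n−1} of any principal (n−1)×(n−1) submatrix satisfy ∑_{α=1}^{n−1} arctan λ'_α ≥ (n−3)π/2 + δ. -/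
/-!
Cauchy interlacing in counting form: on the span of the eigenvectors of `H` with eigenvalue
`≥ c` the quadratic form is `≥ c ‖x‖²`, while on the zero-extension of the span of the
eigenvectors of the principal submatrix with eigenvalue `< c` it is `< c ‖x‖²` away from `0`.
These subspaces are therefore disjoint, so their dimensions add up to at most `n`: the submatrix
has at most one eigenvalue `≥ c` fewer than `H`. With both spectra sorted decreasingly this reads
`λ_{i+1} ≤ λ'_i`, hence `∑ arctan λ'_α ≥ ∑ arctan λ_i - arctan λ_1 > ∑ arctan λ_i - π / 2`.
-/

open Real Finset

section ExtendByZero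

open Function Matrix

variable {R : Type*} [CommSemiring R] {m n : Type*} [Fintype m] [Fintype n] {e : m → n}

lemma extend_zero_dotProduct (he : Injective e) (y : m → R) (w : n → R) :
    extend e y 0 ⬝ᵥ w = y ⬝ᵥ (w ∘ e) :=
  (Fintype.sum_of_injective e he _ _
    (fun j hj => by
      rw [extend_apply' _ _ _ (by simpa using hj), Pi.zero_apply, zero_mul])
    (fun a => by simp [he.extend_apply])).symm

lemma extend_zero_dotProduct_self (he : Injective e) (y : m → R) :
    extend e y 0 ⬝ᵥ extend e y 0 = y ⬝ᵥ y := by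
  rw [extend_zero_dotProduct he, extend_comp he]

lemma extend_zero_dotProduct_mulVec (he : Injective e) (M : Matrix n n R) (y : m → R) :
    extend e y 0 ⬝ᵥ M *ᵥ extend e y 0 = y ⬝ᵥ M.submatrix e e *ᵥ y := by
  rw [extend_zero_dotProduct he]
  congr 1
  ext a
  rw [Function.comp_apply, mulVec, mulVec, dotProduct_comm, extend_zero_dotProduct he,
    dotProduct_comm]
  rfl

end ExtendByZero

namespace Matrix.IsHermitian

open Function

variable {n : Type*} [Fintype n] [DecidableEq n] {A : Matrix n n ℝ} (hA : A.IsHermitian)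

noncomputable def eigenvectorSpan (s : Finset n) : Submodule ℝ (n → ℝ) :=
  Submodule.span ℝ ((fun i => ⇑(hA.eigenvectorBasis i)) '' s)

lemma linearIndependent_eigenvectorBasis :
    LinearIndependent ℝ fun i => ⇑(hA.eigenvectorBasis i) :=
  hA.eigenvectorBasis.orthonormal.linearIndependent.map'
    (WithLp.linearEquiv 2 ℝ (n → ℝ)).toLinearMap (WithLp.linearEquiv 2 ℝ (n → ℝ)).ker

lemma finrank_eigenvectorSpan (s : Finset n) : Module.finrank ℝ (hA.eigenvectorSpan s) = #s := by
  rw [eigenvectorSpan, Set.image_eq_range, ← Fintype.card_coe]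
  exact finrank_span_eq_card (hA.linearIndependent_eigenvectorBasis.comp _ Subtype.val_injective)

lemma dotProduct_sum_smul_eigenvectorBasis (s : Finset n) (a b : n → ℝ) :
    (∑ i ∈ s, a i • ⇑(hA.eigenvectorBasis i)) ⬝ᵥ (∑ i ∈ s, b i • ⇑(hA.eigenvectorBasis i)) =
      ∑ i ∈ s, a i * b i := by
  simpa [EuclideanSpace.inner_eq_star_dotProduct, mul_comm] using
    hA.eigenvectorBasis.orthonormal.inner_sum b a s

lemma mulVec_sum_smul_eigenvectorBasis (s : Finset n) (a : n → ℝ) :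
    A *ᵥ ∑ i ∈ s, a i • ⇑(hA.eigenvectorBasis i) =
      ∑ i ∈ s, (hA.eigenvalues i * a i) • ⇑(hA.eigenvectorBasis i) := by
  simp only [mulVec_sum, mulVec_smul, hA.mulVec_eigenvectorBasis, smul_smul, mul_comm]

lemma dotProduct_mulVec_sub_eq_sum (s : Finset n) (a : n → ℝ) (c : ℝ) :
    let x := ∑ i ∈ s, a i • ⇑(hA.eigenvectorBasis i)
    x ⬝ᵥ A *ᵥ x - c * (x ⬝ᵥ x) = ∑ i ∈ s, a i ^ 2 * (hA.eigenvalues i - c) := by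
  simp only [mulVec_sum_smul_eigenvectorBasis, dotProduct_sum_smul_eigenvectorBasis, mul_sum,
    ← sum_sub_distrib]
  exact sum_congr rfl fun i _ => by ring

lemma le_dotProduct_mulVec_of_mem_eigenvectorSpan {s : Finset n} {c : ℝ}
    (hs : ∀ i ∈ s, c ≤ hA.eigenvalues i) {x : n → ℝ} (hx : x ∈ hA.eigenvectorSpan s) :
    c * (x ⬝ᵥ x) ≤ x ⬝ᵥ A *ᵥ x := by
  obtain ⟨a, rfl⟩ := (Submodule.mem_span_image_finset_iff_exists_fun' ℝ).mp hx
  rw [← sub_nonneg, hA.dotProduct_mulVec_sub_eq_sum]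
  exact sum_nonneg fun i hi => mul_nonneg (sq_nonneg _) (sub_nonneg.mpr (hs i hi))

lemma dotProduct_mulVec_lt_of_mem_eigenvectorSpan {s : Finset n} {c : ℝ}
    (hs : ∀ i ∈ s, hA.eigenvalues i < c) {x : n → ℝ} (hx : x ∈ hA.eigenvectorSpan s)
    (hx0 : x ≠ 0) : x ⬝ᵥ A *ᵥ x < c * (x ⬝ᵥ x) := by
  obtain ⟨a, rfl⟩ := (Submodule.mem_span_image_finset_iff_exists_fun' ℝ).mp hx
  obtain ⟨j, hj, haj⟩ : ∃ j ∈ s, a j ≠ 0 := by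
    by_contra! h
    exact hx0 (sum_eq_zero fun i hi => by rw [h i hi, zero_smul])
  rw [← sub_neg, hA.dotProduct_mulVec_sub_eq_sum]
  exact sum_neg'
    (fun i hi => mul_nonpos_of_nonneg_of_nonpos (sq_nonneg _) (sub_nonpos.mpr (hs i hi).le))
    ⟨j, hj, mul_neg_of_pos_of_neg (pow_two_pos_of_ne_zero haj) (sub_neg.mpr (hs j hj))⟩

theorem card_le_card_eigenvalues_submatrix {m : Type*} [Fintype m] [DecidableEq m] {e : m → n}
    (he : Injective e) (hS : (A.submatrix e e).IsHermitian) (c : ℝ) :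
    #{i | c ≤ hA.eigenvalues i} + Fintype.card m ≤
      #{a | c ≤ hS.eigenvalues a} + Fintype.card n := by
  set s : Finset n := {i | c ≤ hA.eigenvalues i}
  set t : Finset m := {a | hS.eigenvalues a < c}
  have hcard_t : #{a | c ≤ hS.eigenvalues a} + #t = Fintype.card m := by
    simpa [t, not_le] using card_filter_add_card_filter_not (s := univ) (c ≤ hS.eigenvalues ·)
  let pad := ExtendByZero.linearMap ℝ e
  have hpad : Injective pad := extend_injective he (0 : n → ℝ)
  let W := hA.eigenvectorSpan s
  let W' := (hS.eigenvectorSpan t).map pad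
  by_contra! hcard
  have hWW' : ¬ Disjoint W W' := by
    intro hd
    have := Submodule.finrank_add_finrank_le_of_disjoint hd
    rw [hA.finrank_eigenvectorSpan, ← (Submodule.equivMapOfInjective pad hpad _).finrank_eq,
      hS.finrank_eigenvectorSpan, Module.finrank_fintype_fun_eq_card] at this
    omega
  obtain ⟨x, hxW, hxW', hx0⟩ : ∃ x ∈ W, x ∈ W' ∧ x ≠ 0 := by
    simpa [Submodule.disjoint_def] using hWW'
  obtain ⟨y, hy, rfl⟩ := Submodule.mem_map.mp hxW'
  have hy0 : y ≠ 0 := by rintro rfl; exact hx0 (map_zero pad)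
  have hge := hA.le_dotProduct_mulVec_of_mem_eigenvectorSpan (fun i hi => (mem_filter.mp hi).2) hxW
  change c * (extend e y 0 ⬝ᵥ extend e y 0) ≤ extend e y 0 ⬝ᵥ A *ᵥ extend e y 0 at hge
  rw [extend_zero_dotProduct_self he, extend_zero_dotProduct_mulVec he] at hge
  have hlt :=
    hS.dotProduct_mulVec_lt_of_mem_eigenvectorSpan (fun a ha => (mem_filter.mp ha).2) hy hy0
  linarith

end Matrix.IsHermitian

section Antitone

variable {α : Type*} [LinearOrder α] {n : ℕ}

lemma exists_perm_antitone_comp (f : Fin n → α) : ∃ σ : Equiv.Perm (Fin n), Antitone (f ∘ σ) :=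
  ⟨Fin.revPerm.trans (Tuple.sort f), (Tuple.monotone_sort f).comp_antitone Fin.rev_anti⟩

lemma card_filter_le_comp_perm (f : Fin n → α) (σ : Equiv.Perm (Fin n)) (c : α) :
    #{i | c ≤ f (σ i)} = #{i | c ≤ f i} :=
  card_equiv σ (by simp)

lemma Antitone.le_apply_of_lt_card_filter {f : Fin n → α} (hf : Antitone f) {c : α} {i : Fin n}
    (h : (i : ℕ) < #{j | c ≤ f j}) : c ≤ f i := by
  by_contra! hfi
  have hsub : ({j | c ≤ f j} : Finset (Fin n)) ⊆ Iio i := fun j hj =>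
    mem_Iio.mpr (lt_of_not_ge fun hij => hfi.not_ge ((mem_filter.mp hj).2.trans (hf hij)))
  exact ((card_le_card hsub).trans_eq (Fin.card_Iio i)).not_gt h

lemma Antitone.succ_le_card_filter {f : Fin n → α} (hf : Antitone f) (i : Fin n) :
    (i : ℕ) + 1 ≤ #{j | f i ≤ f j} :=
  Fin.card_Iic i ▸ card_le_card fun _ hj => mem_filter.mpr ⟨mem_univ _, hf (mem_Iic.mp hj)⟩

lemma Antitone.apply_succ_le_of_card_filter_le {m : ℕ} {f : Fin (m + 1) → α} {g : Fin m → α}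
    (hf : Antitone f) (hg : Antitone g) (h : ∀ c, #{i | c ≤ f i} ≤ #{a | c ≤ g a} + 1)
    (a : Fin m) : f a.succ ≤ g a := by
  refine hg.le_apply_of_lt_card_filter ?_
  have := (hf.succ_le_card_filter a.succ).trans (h (f a.succ))
  simp only [Fin.val_succ] at this
  omega

end Antitone

lemma sum_le_sum_add_of_card_filter_le {α β : Type*} [LinearOrder α] [AddCommMonoid β]
    [PartialOrder β] [IsOrderedAddMonoid β] {m : ℕ} {f : Fin (m + 1) → α} {g : Fin m → α}
    (h : ∀ c, #{i | c ≤ f i} ≤ #{a | c ≤ g a} + 1) {φ : α → β} (hφ : Monotone φ) {B : β}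
    (hB : ∀ x, φ x ≤ B) : ∑ i, φ (f i) ≤ ∑ a, φ (g a) + B := by
  obtain ⟨σ, hσ⟩ := exists_perm_antitone_comp f
  obtain ⟨τ, hτ⟩ := exists_perm_antitone_comp g
  have hinterlace := hσ.apply_succ_le_of_card_filter_le hτ fun c => by
    simpa only [Function.comp_apply, card_filter_le_comp_perm] using h c
  calc ∑ i, φ (f i) = ∑ i, φ (f (σ i)) := (Equiv.sum_comp σ (φ ∘ f)).symm
    _ = φ (f (σ 0)) + ∑ a : Fin m, φ (f (σ a.succ)) := Fin.sum_univ_succ _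
    _ ≤ B + ∑ a, φ (g (τ a)) := add_le_add (hB _) (sum_le_sum fun a _ => hφ (hinterlace a))
    _ = ∑ a, φ (g a) + B := by rw [add_comm, Equiv.sum_comp τ fun a => φ (g a)]

theorem stmt15_general (m : ℕ) (H : Matrix (Fin (m + 1)) (Fin (m + 1)) ℝ)
    (hH : H.IsHermitian)
    (hsub : (H.submatrix Fin.castSucc Fin.castSucc).IsHermitian)
    (δ : ℝ)
    (hsum : ((m : ℝ) + 1 - 2) * (π / 2) + δ ≤ ∑ i, Real.arctan (hH.eigenvalues i)) :
    ((m : ℝ) + 1 - 3) * (π / 2) + δ ≤ ∑ α, Real.arctan (hsub.eigenvalues α) := by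
  have hinterlace (c : ℝ) : #{i | c ≤ hH.eigenvalues i} ≤ #{α | c ≤ hsub.eigenvalues α} + 1 := by
    have := hH.card_le_card_eigenvalues_submatrix (Fin.castSucc_injective m) hsub c
    simp only [Fintype.card_fin] at this
    omega
  have := sum_le_sum_add_of_card_filter_le hinterlace arctan_strictMono.monotone
    fun x => (arctan_lt_pi_div_two x).le
  linarith

theorem stmt15 (m : ℕ) (hm : 1 ≤ m) (H : Matrix (Fin (m + 1)) (Fin (m + 1)) ℝ)
    (hH : H.IsHermitian)
    (hsub : (H.submatrix Fin.castSucc Fin.castSucc).IsHermitian)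
    (δ : ℝ) (hδ : 0 < δ)
    (hsum : ((m : ℝ) + 1 - 2) * (π / 2) + δ ≤ ∑ i, Real.arctan (hH.eigenvalues i)) :
    ((m : ℝ) + 1 - 3) * (π / 2) + δ ≤ ∑ α, Real.arctan (hsub.eigenvalues α) :=
  stmt15_general m H hH hsub δ hsum
end
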